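/- If R is a ring with unit whose underlying additive abelian group is not residually finite, then the category of free left R-modules on at most 2 generators (with R-linear maps) is not residually finite. -/

import Mathlib

open CategoryTheory

/-- A category is residually finite if any two distinct parallel morphisms
can be separated by a functor to a finite category. -/
def ResiduallyFiniteCat (C : Type*) [Category C] : Prop :=
  ∀ {X Y : C} (f g : X ⟶ Y), f ≠ g →
    ∃ (D : Type) (_ : SmallCategory D) (_ : FinCategory D) (F : C ⥤ D),
      F.map f ≠ F.map g

/-- An additive group is residually finite if distinct elements can be
separated by homomorphisms to finite additive groups. -/
def ResiduallyFiniteAddGroup (A : Type*) [AddGroup A] : Prop :=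
  ∀ f g : A, f ≠ g →
    ∃ (D : Type) (_ : AddGroup D) (_ : Fintype D) (φ : A →+ D), φ f ≠ φ g

/-- The category of free left `R`-modules on at most `N` generators, as the
full subcategory of `ModuleCat R` on modules isomorphic to some `R^n`, `n ≤ N`. -/
abbrev FreeModCatLE (R : Type) [Ring R] (N : ℕ) :=
  CategoryTheory.ObjectProperty.FullSubcategory
    (fun M : ModuleCat.{0} R => ∃ n : ℕ, n ≤ N ∧ Nonempty (M ≃ₗ[R] (Fin n → R)))

/-! For a linear form `f` and a vector `v` with `f v = 0`, the transvections `x ↦ x + f x • (r • v)`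
compose additively in `r`; on `R²` with `f = proj 1` and `v = (1, 0)` they are the unitriangular
matrices `(1 r; 0 1)`, a copy of the additive group of `R` inside the automorphism group of the
object `R²`. A functor to a finite category maps `Aut X` to a finite group `Aut (F X)`, so every
automorphism group in a residually finite category is residually finite, and so are its subgroups.
-/

namespace ResiduallyFiniteAddGroup

theorem of_injective {A B : Type*} [AddGroup A] [AddGroup B] (hB : ResiduallyFiniteAddGroup B)
    (φ : A →+ B) (hφ : Function.Injective φ) : ResiduallyFiniteAddGroup A := by
  intro a b hab
  obtain ⟨D, hD, hDfin, ψ, hψ⟩ := hB (φ a) (φ b) (hφ.ne hab)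
  exact ⟨D, hD, hDfin, ψ.comp φ, hψ⟩

end ResiduallyFiniteAddGroup

instance CategoryTheory.Aut.finite {C : Type*} [Category C] (X : C) [Finite (X ⟶ X)] :
    Finite (Aut X) :=
  Finite.of_injective (fun e : Aut X => e.hom) fun _ _ h => Iso.ext h

theorem ResiduallyFiniteCat.residuallyFiniteAddGroup_aut {C : Type*} [Category C]
    (hC : ResiduallyFiniteCat C) (X : C) : ResiduallyFiniteAddGroup (Additive (Aut X)) := by
  intro a b hab
  have hne : a.toMul.hom ≠ b.toMul.hom := fun h => hab (congrArg Additive.ofMul (Iso.ext h))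
  obtain ⟨D, _, _, F, hF⟩ := hC _ _ hne
  refine ⟨Additive (Aut (F.obj X)), _, Fintype.ofFinite _, (F.mapAut X).toAdditive, ?_⟩
  exact fun h => hF (congrArg (fun e : Additive (Aut (F.obj X)) => e.toMul.hom) h)

section Transvection

variable {R V : Type*} [Ring R] [AddCommGroup V] [Module R V]

def LinearEquiv.transvectionAddHom {f : Module.Dual R V} {v : V} (hv : f v = 0) :
    R →+ Additive (V ≃ₗ[R] V) where
  toFun r := .ofMul (LinearEquiv.transvection (f := f) (v := r • v) (by simp [hv]))
  map_zero' := by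
    apply Additive.toMul.injective
    ext x
    simp
  map_add' r s := by
    apply Additive.toMul.injective
    ext x
    simp only [toMul_ofMul, toMul_add, LinearEquiv.mul_apply, LinearEquiv.transvection.coe_apply]
    rw [LinearMap.transvection.comp_of_left_eq_apply (by simp [hv]), add_smul]

theorem LinearEquiv.transvectionAddHom_injective {f : Module.Dual R V} {v : V} (hv : f v = 0)
    {x : V} (hx : f x = 1) (hv_inj : Function.Injective fun r : R => r • v) :
    Function.Injective (transvectionAddHom hv) := by
  intro r s h
  have := congrArg (fun e : Additive (V ≃ₗ[R] V) => e.toMul x) h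
  simpa [transvectionAddHom, LinearMap.transvection.apply, hx, hv_inj.eq_iff] using this

end Transvection

def ModuleCat.linearAutMulEquivAut {R : Type*} [Ring R] (V : Type*) [AddCommGroup V] [Module R V] :
    (V ≃ₗ[R] V) ≃* Aut (ModuleCat.of R V) where
  toFun e := e.toModuleIso
  invFun e := e.toLinearEquiv
  left_inv _ := rfl
  right_inv _ := rfl
  map_mul' _ _ := rfl

/-- If the additive group of `R` is not residually finite, then the category of
free left `R`-modules on at most 2 generators is not residually finite. -/
theorem freeModCatLE_two_not_residuallyFinite (R : Type) [Ring R]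
    (hR : ¬ ResiduallyFiniteAddGroup R) :
    ¬ ResiduallyFiniteCat (FreeModCatLE R 2) := by
  intro hC
  let M : FreeModCatLE R 2 := ⟨ModuleCat.of R (Fin 2 → R), 2, le_rfl, ⟨LinearEquiv.refl R _⟩⟩
  let autM : ((Fin 2 → R) ≃ₗ[R] (Fin 2 → R)) ≃* Aut M :=
    (ModuleCat.linearAutMulEquivAut _).trans
      ((ObjectProperty.fullyFaithfulι _).autMulEquivOfFullyFaithful M).symm
  let f : Module.Dual R (Fin 2 → R) := LinearMap.proj 1
  have hv : f (Pi.single 0 1) = 0 := by simp [f]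
  have hx : f (Pi.single 1 1) = 1 := by simp [f]
  have hv_inj : Function.Injective fun r : R => r • (Pi.single 0 1 : Fin 2 → R) := by
    intro r s h
    simpa using congrFun h 0
  exact hR <| (hC.residuallyFiniteAddGroup_aut M).of_injective
    (autM.toAdditive.toAddMonoidHom.comp (LinearEquiv.transvectionAddHom hv))
    (autM.toAdditive.injective.comp (LinearEquiv.transvectionAddHom_injective hv hx hv_inj))
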